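/- arXiv:2312.08407 — 2 statements merged into one kernel-verified Lean document; each statement's English description precedes it below -/
import Mathlib

section
/- Let 1 ≤ p < ∞, let ρ : [0,1] → ℝ be bounded and measurable, and let y ∈ (0,1). Then for every x ∈ [0,1], H_y(ρ, x) − G_y(ρ, x) = 2 ∫₀¹ ω(ρ, (1−y)x + yt, y) dt, and consequently ‖H_y(ρ) − G_y(ρ)‖_p ≤ 4 (1 − y)^{−1/p} τ(ρ, y)_p. (Intermediate claim in the proof of Theorem 4.1.) -/
open MeasureTheory Set Real

/-- Local modulus of continuity of `ρ` at `x` with radius `δ`, relative to `[0,1]`. -/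
noncomputable def omegaMod (ρ : ℝ → ℝ) (x δ : ℝ) : ℝ :=
  sSup {d : ℝ | ∃ u ∈ Icc (x - δ) (x + δ) ∩ Icc (0:ℝ) 1,
    ∃ v ∈ Icc (x - δ) (x + δ) ∩ Icc (0:ℝ) 1, d = |ρ u - ρ v|}

/-- One-sided operator `G_y`. -/
noncomputable def Gop (y : ℝ) (ρ : ℝ → ℝ) (x : ℝ) : ℝ :=
  ∫ t in (0:ℝ)..1, (ρ ((1 - y) * x + y * t) - omegaMod ρ ((1 - y) * x + y * t) y)

/-- One-sided operator `H_y`. -/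
noncomputable def Hop (y : ℝ) (ρ : ℝ → ℝ) (x : ℝ) : ℝ :=
  ∫ t in (0:ℝ)..1, (ρ ((1 - y) * x + y * t) + omegaMod ρ ((1 - y) * x + y * t) y)

/-- `L^p` norm on `[0,1]`. -/
noncomputable def lpNorm (p : ℝ) (f : ℝ → ℝ) : ℝ :=
  (∫ x in (0:ℝ)..1, |f x| ^ p) ^ (1 / p)

/-- Averaged modulus of smoothness `τ(ρ, δ)_p`. -/
noncomputable def tau (p : ℝ) (ρ : ℝ → ℝ) (δ : ℝ) : ℝ :=
  lpNorm p (fun x => omegaMod ρ x δ)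

/-- The step function `Φ`. -/
noncomputable def stepPhi (x : ℝ) : ℝ := if 0 < x then 1 else 0

/-- Operator `M_k` built from polynomials `P ≤ Φ ≤ Q`, applied to `f` with
`f x = f 0 + ∫_0^x g`. -/
noncomputable def Mop (P Q : Polynomial ℝ) (f0 : ℝ) (g : ℝ → ℝ) (x : ℝ) : ℝ :=
  f0 + (∫ t in (0:ℝ)..1, P.eval (x - t) * max (g t) 0)
     - ∫ t in (0:ℝ)..1, Q.eval (x - t) * max (-g t) 0

/-- Operator `N_k` built from polynomials `P ≤ Φ ≤ Q`, applied to `f` with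
`f x = f 0 + ∫_0^x g`. -/
noncomputable def Nop (P Q : Polynomial ℝ) (f0 : ℝ) (g : ℝ → ℝ) (x : ℝ) : ℝ :=
  f0 + (∫ t in (0:ℝ)..1, Q.eval (x - t) * max (g t) 0)
     - ∫ t in (0:ℝ)..1, P.eval (x - t) * max (-g t) 0

/-- Degree of best one-sided approximation by polynomials of degree at most `k`. -/
noncomputable def bestE (p : ℝ) (k : ℕ) (ρ : ℝ → ℝ) : ℝ :=
  sInf {c : ℝ | ∃ P Q : Polynomial ℝ, P.natDegree ≤ k ∧ Q.natDegree ≤ k ∧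
    (∀ x ∈ Icc (0:ℝ) 1, P.eval x ≤ ρ x ∧ ρ x ≤ Q.eval x) ∧
    c = lpNorm p (fun x => Q.eval x - P.eval x)}

/-!
The integrands of `H_y` and `G_y` differ by `2ω`, so the identity is linearity of the integral.
For the bound, Jensen's inequality gives `(∫ ω(ℓ(x,t)) dt)^p ≤ ∫ ω(ℓ(x,t))^p dt` for the affine
map `ℓ(x,t) = (1-y)x + yt`; after exchanging the integrals, for fixed `t` the substitution
`u = ℓ(x,t)` maps `[0,1]` onto a subinterval of `[0,1]` with Jacobian `1 - y`. This yields the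
constant `2 (1-y)^(-1/p)`. Measurability of `ω(ρ, ·, y)` holds because its superlevel sets are
countable unions of intersections of closed `y`-neighbourhoods of measurable sets.
-/

theorem intervalIntegral.integral_add_sub_integral_sub {f : ℝ → ℝ} {a b : ℝ}
    (hf : IntervalIntegrable f volume a b) (g : ℝ → ℝ) :
    (∫ t in a..b, (f t + g t)) - ∫ t in a..b, (f t - g t) = 2 * ∫ t in a..b, g t := by
  by_cases hg : IntervalIntegrable g volume a b
  · rw [intervalIntegral.integral_add hf hg, intervalIntegral.integral_sub hf hg]
    ring
  -- otherwise `f + g` and `f - g` are not integrable either, and all three integrals vanish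
  · have hfg : ¬ IntervalIntegrable (fun t => f t + g t) volume a b := fun h =>
      hg (by simpa using h.sub hf)
    have hfg' : ¬ IntervalIntegrable (fun t => f t - g t) volume a b := fun h =>
      hg (by simpa using hf.sub h)
    rw [intervalIntegral.integral_undef hfg, intervalIntegral.integral_undef hfg',
      intervalIntegral.integral_undef hg]
    ring

theorem rpow_integral_le_integral_rpow {α : Type*} [MeasurableSpace α] {μ : Measure α}
    [IsProbabilityMeasure μ] {f : α → ℝ} {p : ℝ} (hp : 1 ≤ p) (hf0 : 0 ≤ᵐ[μ] f)
    (hf : Integrable f μ) (hfp : Integrable (fun t => f t ^ p) μ) :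
    (∫ t, f t ∂μ) ^ p ≤ ∫ t, f t ^ p ∂μ :=
  (convexOn_rpow hp).map_integral_le
    (fun z _ => (continuousAt_rpow_const z p (Or.inr (by linarith))).continuousWithinAt)
    isClosed_Ici hf0 hf hfp

theorem measurableSet_setOf_exists_mem_Icc {E : Set ℝ} (hE : MeasurableSet E) {δ : ℝ}
    (hδ : 0 ≤ δ) : MeasurableSet {x | ∃ u ∈ E, u ∈ Icc (x - δ) (x + δ)} := by
  have h : {x | ∃ u ∈ E, u ∈ Icc (x - δ) (x + δ)} =
      (⋃ u ∈ E, Metric.ball u δ) ∪ (· - δ) ⁻¹' E ∪ (· + δ) ⁻¹' E := by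
    ext x
    simp only [← mem_Icc_iff_abs_le, mem_union, mem_iUnion, Metric.mem_ball, Real.dist_eq,
      mem_preimage, exists_prop]
    constructor
    · rintro ⟨u, hu, hxu⟩
      rcases hxu.lt_or_eq with hlt | heq
      · exact Or.inl (Or.inl ⟨u, hu, hlt⟩)
      · rcases (abs_eq hδ).1 heq with h | h
        · exact Or.inl (Or.inr (by rwa [show x - δ = u by linarith]))
        · exact Or.inr (by rwa [show x + δ = u by linarith])
    · rintro ((⟨u, hu, hlt⟩ | h) | h)
      · exact ⟨u, hu, hlt.le⟩
      · exact ⟨x - δ, h, by simp [abs_of_nonneg hδ]⟩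
      · exact ⟨x + δ, h, by simp [abs_of_nonneg hδ]⟩
  rw [h]
  exact ((isOpen_biUnion fun u _ => Metric.isOpen_ball).measurableSet.union
    (measurable_id.sub_const δ hE)).union (measurable_id.add_const δ hE)

theorem omegaMod_nonneg (ρ : ℝ → ℝ) (x δ : ℝ) : 0 ≤ omegaMod ρ x δ :=
  Real.sSup_nonneg (by rintro _ ⟨u, -, v, -, rfl⟩; exact abs_nonneg _)

section omegaMod

variable {ρ : ℝ → ℝ} {M : ℝ}

theorem abs_sub_le_two_mul_of_forall_abs_le (hM : ∀ x ∈ Icc (0:ℝ) 1, |ρ x| ≤ M) {u v : ℝ}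
    (hu : u ∈ Icc (0:ℝ) 1) (hv : v ∈ Icc (0:ℝ) 1) : |ρ u - ρ v| ≤ 2 * M :=
  (abs_sub _ _).trans (by linarith [hM u hu, hM v hv])

theorem omegaMod_le (hM : ∀ x ∈ Icc (0:ℝ) 1, |ρ x| ≤ M) (x δ : ℝ) :
    omegaMod ρ x δ ≤ 2 * M :=
  Real.sSup_le
    (by rintro _ ⟨u, hu, v, hv, rfl⟩; exact abs_sub_le_two_mul_of_forall_abs_le hM hu.2 hv.2)
    (by linarith [(abs_nonneg _).trans (hM 0 ⟨le_rfl, zero_le_one⟩)])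

theorem lt_omegaMod_iff (hM : ∀ x ∈ Icc (0:ℝ) 1, |ρ x| ≤ M) {x δ c : ℝ} (hc : 0 ≤ c) :
    c < omegaMod ρ x δ ↔ ∃ u ∈ Icc (x - δ) (x + δ) ∩ Icc (0:ℝ) 1,
      ∃ v ∈ Icc (x - δ) (x + δ) ∩ Icc (0:ℝ) 1, c < ρ u - ρ v := by
  unfold omegaMod
  constructor
  · intro hlt
    obtain ⟨_, ⟨u, hu, v, hv, rfl⟩, hcd⟩ := exists_lt_of_lt_csSup (by
      by_contra hS
      rw [not_nonempty_iff_eq_empty.1 hS, Real.sSup_empty] at hlt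
      linarith) hlt
    rcases lt_abs.1 hcd with h | h
    · exact ⟨u, hu, v, hv, h⟩
    · exact ⟨v, hv, u, hu, by linarith⟩
  · rintro ⟨u, hu, v, hv, h⟩
    refine lt_csSup_of_lt ⟨2 * M, ?_⟩ ⟨u, hu, v, hv, rfl⟩ (h.trans_le (le_abs_self _))
    rintro _ ⟨u, hu, v, hv, rfl⟩
    exact abs_sub_le_two_mul_of_forall_abs_le hM hu.2 hv.2

theorem measurable_omegaMod (hρ : Measurable ρ) (hM : ∀ x ∈ Icc (0:ℝ) 1, |ρ x| ≤ M) {δ : ℝ}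
    (hδ : 0 ≤ δ) : Measurable fun x => omegaMod ρ x δ := by
  refine measurable_of_Ioi fun c => ?_
  rcases lt_or_ge c 0 with hc | hc
  · convert MeasurableSet.univ
    exact eq_univ_of_forall fun x => hc.trans_le (omegaMod_nonneg ρ x δ)
  -- a rational `q` with `ρ v < q < ρ u - c` turns the superlevel set into a countable union
  have h : (fun x => omegaMod ρ x δ) ⁻¹' Ioi c = ⋃ q : ℚ,
      {x | ∃ u ∈ Icc 0 1 ∩ ρ ⁻¹' Ioi (q + c), u ∈ Icc (x - δ) (x + δ)} ∩
        {x | ∃ v ∈ Icc 0 1 ∩ ρ ⁻¹' Iio q, v ∈ Icc (x - δ) (x + δ)} := by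
    ext x
    simp only [mem_preimage, mem_Ioi, lt_omegaMod_iff hM hc, mem_iUnion, mem_inter_iff,
      mem_ofPred_eq, mem_Iio]
    constructor
    · rintro ⟨u, hu, v, hv, h⟩
      obtain ⟨q, hvq, hqu⟩ := exists_rat_btwn (show ρ v < ρ u - c by linarith)
      exact ⟨q, ⟨u, ⟨hu.2, by linarith⟩, hu.1⟩, ⟨v, ⟨hv.2, hvq⟩, hv.1⟩⟩
    · rintro ⟨q, ⟨u, ⟨hu, hqu⟩, hxu⟩, ⟨v, ⟨hv, hvq⟩, hxv⟩⟩
      exact ⟨u, ⟨hxu, hu⟩, v, ⟨hxv, hv⟩, by linarith⟩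
  rw [h]
  exact .iUnion fun q =>
    (measurableSet_setOf_exists_mem_Icc (measurableSet_Icc.inter (hρ measurableSet_Ioi)) hδ).inter
      (measurableSet_setOf_exists_mem_Icc (measurableSet_Icc.inter (hρ measurableSet_Iio)) hδ)

end omegaMod

theorem intervalIntegral_comp_affine_le {g : ℝ → ℝ} (hg0 : ∀ u, 0 ≤ g u)
    (hg : IntervalIntegrable g volume 0 1) {y t : ℝ} (hy0 : 0 ≤ y) (hy1 : y < 1)
    (ht : t ∈ Icc (0:ℝ) 1) :
    ∫ x in (0:ℝ)..1, g ((1 - y) * x + y * t) ≤ (1 - y)⁻¹ * ∫ u in (0:ℝ)..1, g u := by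
  rw [intervalIntegral.integral_comp_mul_add g (sub_ne_zero.2 hy1.ne') (y * t), smul_eq_mul,
    mul_zero, zero_add, mul_one]
  have hyt : y * t ≤ y := mul_le_of_le_one_right hy0 ht.2
  refine mul_le_mul_of_nonneg_left ?_ (inv_nonneg.2 (by linarith))
  exact intervalIntegral.integral_mono_interval (mul_nonneg hy0 ht.1) (by linarith)
      (by linarith) (ae_of_all _ hg0) hg

theorem integral_rpow_integral_comp_affine_le {w : ℝ → ℝ} {p y C : ℝ} (hp : 1 ≤ p)
    (hw : Measurable w) (hw0 : ∀ u, 0 ≤ w u) (hwC : ∀ u, w u ≤ C) (hy0 : 0 ≤ y) (hy1 : y < 1) :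
    ∫ x in (0:ℝ)..1, (∫ t in (0:ℝ)..1, w ((1 - y) * x + y * t)) ^ p ≤
      (1 - y)⁻¹ * ∫ u in (0:ℝ)..1, w u ^ p := by
  set μ := volume.restrict (Ioc (0:ℝ) 1)
  have : IsProbabilityMeasure μ := ⟨by simp [μ]⟩
  have hwC' : ∀ u, ‖w u‖ ≤ C := fun u => by rw [norm_of_nonneg (hw0 u)]; exact hwC u
  have hwpC : ∀ u, ‖w u ^ p‖ ≤ C ^ p := fun u => by
    rw [norm_of_nonneg (rpow_nonneg (hw0 u) p)]
    exact rpow_le_rpow (hw0 u) (hwC u) (by linarith)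
  have hwℓ : Measurable fun z : ℝ × ℝ => w ((1 - y) * z.1 + y * z.2) := hw.comp (by fun_prop)
  have hint : ∀ x, Integrable (fun t => w ((1 - y) * x + y * t)) μ := fun x =>
    .of_bound (hw.comp (by fun_prop)).aestronglyMeasurable C (ae_of_all _ fun t => hwC' _)
  have hint_p : ∀ x, Integrable (fun t => w ((1 - y) * x + y * t) ^ p) μ := fun x =>
    .of_bound ((hw.comp (by fun_prop)).pow_const p).aestronglyMeasurable _
      (ae_of_all _ fun t => hwpC _)
  have hint_prod : Integrable (fun z : ℝ × ℝ => w ((1 - y) * z.1 + y * z.2) ^ p) (μ.prod μ) :=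
    .of_bound (hwℓ.pow_const p).aestronglyMeasurable _ (ae_of_all _ fun z => hwpC _)
  simp only [intervalIntegral.integral_of_le zero_le_one]
  calc ∫ x, (∫ t, w ((1 - y) * x + y * t) ∂μ) ^ p ∂μ
      ≤ ∫ x, ∫ t, w ((1 - y) * x + y * t) ^ p ∂μ ∂μ :=
        integral_mono_of_nonneg
          (ae_of_all _ fun x => rpow_nonneg (integral_nonneg fun t => hw0 _) p)
          hint_prod.integral_prod_left
          (ae_of_all _ fun x =>
            rpow_integral_le_integral_rpow hp (ae_of_all _ fun t => hw0 _) (hint x) (hint_p x))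
    _ = ∫ t, ∫ x, w ((1 - y) * x + y * t) ^ p ∂μ ∂μ :=
        integral_integral_swap (f := fun x t => w ((1 - y) * x + y * t) ^ p) hint_prod
    _ ≤ ∫ t, (1 - y)⁻¹ * ∫ u, w u ^ p ∂μ ∂μ := by
        refine integral_mono_ae hint_prod.integral_prod_right (integrable_const _) ?_
        filter_upwards [ae_restrict_mem measurableSet_Ioc] with t ht
        simpa only [intervalIntegral.integral_of_le zero_le_one] using
          intervalIntegral_comp_affine_le (fun u => rpow_nonneg (hw0 u) p)
            ((intervalIntegrable_iff_integrableOn_Ioc_of_le zero_le_one).2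
              (Integrable.of_bound (μ := μ) (hw.pow_const p).aestronglyMeasurable _
                (ae_of_all _ hwpC)))
            hy0 hy1 (Ioc_subset_Icc_self ht)
    _ = (1 - y)⁻¹ * ∫ u, w u ^ p ∂μ := by simp

theorem lpNorm_nonneg (p : ℝ) (f : ℝ → ℝ) : 0 ≤ lpNorm p f :=
  rpow_nonneg
    (intervalIntegral.integral_nonneg zero_le_one fun _ _ => rpow_nonneg (abs_nonneg _) p) _

theorem lpNorm_congr {p : ℝ} {f g : ℝ → ℝ} (h : ∀ x ∈ Icc (0:ℝ) 1, f x = g x) :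
    lpNorm p f = lpNorm p g := by
  unfold _root_.lpNorm
  rw [intervalIntegral.integral_congr fun x hx => by
    rw [h x (by rwa [uIcc_of_le zero_le_one] at hx)]]

theorem lpNorm_const_mul {p : ℝ} (hp : 0 < p) (c : ℝ) (f : ℝ → ℝ) :
    lpNorm p (fun x => c * f x) = |c| * lpNorm p f := by
  unfold _root_.lpNorm
  simp_rw [abs_mul, mul_rpow (abs_nonneg c) (abs_nonneg _), intervalIntegral.integral_const_mul]
  rw [mul_rpow (rpow_nonneg (abs_nonneg c) p)
      (intervalIntegral.integral_nonneg zero_le_one fun _ _ => rpow_nonneg (abs_nonneg _) p),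
    ← rpow_mul (abs_nonneg c), mul_one_div_cancel hp.ne', rpow_one]

theorem lpNorm_integral_comp_affine_le {w : ℝ → ℝ} {p y C : ℝ} (hp : 1 ≤ p)
    (hw : Measurable w) (hw0 : ∀ u, 0 ≤ w u) (hwC : ∀ u, w u ≤ C) (hy0 : 0 ≤ y) (hy1 : y < 1) :
    lpNorm p (fun x => ∫ t in (0:ℝ)..1, w ((1 - y) * x + y * t)) ≤
      (1 - y) ^ (-(1 / p)) * lpNorm p w := by
  unfold _root_.lpNorm
  simp_rw [abs_of_nonneg (hw0 _),
    abs_of_nonneg (intervalIntegral.integral_nonneg zero_le_one fun _ _ => hw0 _)]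
  have hwp0 : 0 ≤ ∫ u in (0:ℝ)..1, w u ^ p :=
    intervalIntegral.integral_nonneg zero_le_one fun _ _ => rpow_nonneg (hw0 _) p
  calc _ ≤ ((1 - y)⁻¹ * ∫ u in (0:ℝ)..1, w u ^ p) ^ (1 / p) :=
        rpow_le_rpow (intervalIntegral.integral_nonneg zero_le_one fun _ _ =>
            rpow_nonneg (intervalIntegral.integral_nonneg zero_le_one fun _ _ => hw0 _) p)
          (integral_rpow_integral_comp_affine_le hp hw hw0 hwC hy0 hy1)
          (one_div_nonneg.2 (by linarith))
    _ = _ := by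
        have h1y : 0 ≤ 1 - y := by linarith
        rw [mul_rpow (inv_nonneg.2 h1y) hwp0, inv_rpow h1y, ← rpow_neg h1y]

/-- Intermediate claim in the proof of Theorem 4.1. -/
theorem stmt8 (p : ℝ) (hp : 1 ≤ p) (ρ : ℝ → ℝ) (hmeas : Measurable ρ)
    (hbdd : ∃ M : ℝ, ∀ x ∈ Icc (0:ℝ) 1, |ρ x| ≤ M)
    (y : ℝ) (hy : y ∈ Ioo (0:ℝ) 1) :
    (∀ x ∈ Icc (0:ℝ) 1,
      Hop y ρ x - Gop y ρ x =
        2 * ∫ t in (0:ℝ)..1, omegaMod ρ ((1 - y) * x + y * t) y) ∧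
    lpNorm p (fun x => Hop y ρ x - Gop y ρ x) ≤
      4 * (1 - y) ^ (-(1 / p) : ℝ) * tau p ρ y := by
  obtain ⟨M, hM⟩ := hbdd
  obtain ⟨hy0, hy1⟩ := hy
  have hρℓ : ∀ x ∈ Icc (0:ℝ) 1,
      IntervalIntegrable (fun t => ρ ((1 - y) * x + y * t)) volume 0 1 := fun x hx =>
    (intervalIntegrable_iff_integrableOn_Icc_of_le zero_le_one).2 <|
      .of_bound measure_Icc_lt_top (hmeas.comp (by fun_prop)).aestronglyMeasurable M <|
        (ae_restrict_mem measurableSet_Icc).mono fun t ht => hM _ <| by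
          simpa using convex_Icc (0:ℝ) 1 hx ht (sub_nonneg.2 hy1.le) hy0.le (by ring)
  have hdiff : ∀ x ∈ Icc (0:ℝ) 1, Hop y ρ x - Gop y ρ x =
      2 * ∫ t in (0:ℝ)..1, omegaMod ρ ((1 - y) * x + y * t) y := fun x hx =>
    intervalIntegral.integral_add_sub_integral_sub (hρℓ x hx) _
  refine ⟨hdiff, ?_⟩
  have hrhs_nonneg : 0 ≤ (1 - y) ^ (-(1 / p)) * tau p ρ y :=
    mul_nonneg (rpow_nonneg (sub_nonneg.2 hy1.le) _) (_root_.lpNorm_nonneg _ _)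
  calc lpNorm p (fun x => Hop y ρ x - Gop y ρ x)
      = 2 * lpNorm p (fun x => ∫ t in (0:ℝ)..1, omegaMod ρ ((1 - y) * x + y * t) y) := by
        rw [lpNorm_congr hdiff, lpNorm_const_mul (by linarith), abs_two]
    _ ≤ 2 * ((1 - y) ^ (-(1 / p)) * tau p ρ y) :=
        mul_le_mul_of_nonneg_left (lpNorm_integral_comp_affine_le (w := (omegaMod ρ · y)) hp
          (measurable_omegaMod hmeas hM hy0.le) (omegaMod_nonneg ρ · y) (omegaMod_le hM · y)
          hy0.le hy1) zero_le_two
    _ ≤ 4 * (1 - y) ^ (-(1 / p) : ℝ) * tau p ρ y := by linarith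
end

section
/- Let k ∈ ℕ, k ≥ 2, let y ∈ (0,1), and let ρ : [0,1] → ℝ be continuous. Suppose P_k and q_k are algebraic polynomials of degree at most k with P_k(u) ≤ Φ(u) ≤ q_k(u) for all u ∈ [−1, 1]. Define L_{k,y}(ρ) = M_k(G_y(ρ)) and J_{k,y}(ρ) = N_k(H_y(ρ)). Then L_{k,y}(ρ) and J_{k,y}(ρ) are polynomials of degree at most k and L_{k,y}(ρ, x) ≤ ρ(x) ≤ J_{k,y}(ρ, x) for every x ∈ [0,1]. (Theorem 4.2, sandwich part.) -/
/-!
`G_y ρ` and `H_y ρ` average `ρ ∓ ω(ρ, ·, y)` over the window `[(1 - y)x, (1 - y)x + y] ∋ x`, on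
which `|ρ s - ρ x| ≤ ω(ρ, s, y)`; hence `G_y ρ ≤ ρ ≤ H_y ρ`. As differences of primitives of
continuous functions they satisfy `f x = f 0 + ∫₀ˣ f'` with `f'` integrable. Writing
`∫₀ˣ g = ∫₀¹ Φ(x - t) g(t) dt` and splitting `g = g₊ - g₋`, the bounds `P ≤ Φ ≤ Q` give
`M_k f ≤ f ≤ N_k f`, and `∫₀¹ P(x - t) g₊(t) dt` is a polynomial of degree at most `k` in `x`.
-/

open MeasureTheory Set Real

section ModulusOfContinuity

variable {ρ : ℝ → ℝ}

lemma abs_sub_le_omegaMod (hρ : ContinuousOn ρ (Icc 0 1)) {x δ u v : ℝ}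
    (hu : u ∈ Icc (x - δ) (x + δ) ∩ Icc 0 1) (hv : v ∈ Icc (x - δ) (x + δ) ∩ Icc 0 1) :
    |ρ u - ρ v| ≤ omegaMod ρ x δ := by
  obtain ⟨C, hC⟩ := isCompact_Icc.exists_bound_of_continuousOn hρ
  refine le_csSup ⟨C + C, ?_⟩ ⟨u, hu, v, hv, rfl⟩
  rintro d ⟨u, ⟨-, hu⟩, v, ⟨-, hv⟩, rfl⟩
  have hCu := hC u hu
  have hCv := hC v hv
  rw [Real.norm_eq_abs] at hCu hCv
  linarith [abs_sub (ρ u) (ρ v)]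

lemma exists_mem_window_abs_sub_le {p q u δ : ℝ} (hδ : 0 ≤ δ) (hq : q ∈ Icc (0:ℝ) 1)
    (hu : u ∈ Icc (p - δ) (p + δ) ∩ Icc 0 1) :
    ∃ u' ∈ Icc (q - δ) (q + δ) ∩ Icc 0 1, |u' - u| ≤ |q - p| := by
  obtain ⟨⟨hu₁, hu₂⟩, hu₃, hu₄⟩ := hu
  refine ⟨max (max (q - δ) 0) (min u (min (q + δ) 1)), ⟨⟨?_, ?_⟩, ?_, ?_⟩, ?_⟩
  all_goals grind

/-- Moving the centre of the window by less than `η` moves each pair of points of the window by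
at most as much, so uniform continuity of `ρ` controls the change of `omegaMod`. -/
lemma exists_pos_omegaMod_le_add (hρ : ContinuousOn ρ (Icc 0 1)) {δ ε : ℝ} (hδ : 0 ≤ δ)
    (hε : 0 < ε) :
    ∃ η > 0, ∀ p ∈ Icc (0:ℝ) 1, ∀ q ∈ Icc (0:ℝ) 1, |p - q| < η →
      omegaMod ρ p δ ≤ omegaMod ρ q δ + ε := by
  obtain ⟨η, hη, hρη⟩ :=
    Metric.uniformContinuousOn_iff.mp (isCompact_Icc.uniformContinuousOn_of_continuous hρ)
      (ε / 2) (half_pos hε)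
  refine ⟨η, hη, fun p hp q hq hpq => ?_⟩
  have hp_mem : p ∈ Icc (p - δ) (p + δ) ∩ Icc 0 1 := ⟨⟨by linarith, by linarith⟩, hp⟩
  refine csSup_le ⟨_, p, hp_mem, p, hp_mem, rfl⟩ ?_
  rintro d ⟨u, hu, v, hv, rfl⟩
  obtain ⟨u', hu', huu'⟩ := exists_mem_window_abs_sub_le hδ hq hu
  obtain ⟨v', hv', hvv'⟩ := exists_mem_window_abs_sub_le hδ hq hv
  rw [abs_sub_comm q p] at huu' hvv'
  have hρu : dist (ρ u') (ρ u) < ε / 2 := hρη u' hu'.2 u hu.2 (huu'.trans_lt hpq)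
  have hρv : dist (ρ v') (ρ v) < ε / 2 := hρη v' hv'.2 v hv.2 (hvv'.trans_lt hpq)
  rw [Real.dist_eq] at hρu hρv
  have hq_bound := abs_sub_le_omegaMod hρ hu' hv'
  calc |ρ u - ρ v| ≤ |ρ u' - ρ u| + |ρ u' - ρ v'| + |ρ v' - ρ v| := by
        rw [abs_sub_comm (ρ u') (ρ u)]
        linarith [abs_sub_le (ρ u) (ρ u') (ρ v), abs_sub_le (ρ u') (ρ v') (ρ v)]
    _ ≤ omegaMod ρ q δ + ε := by linarith

lemma continuousOn_omegaMod (hρ : ContinuousOn ρ (Icc 0 1)) {δ : ℝ} (hδ : 0 ≤ δ) :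
    ContinuousOn (fun x => omegaMod ρ x δ) (Icc 0 1) := by
  refine Metric.continuousOn_iff.mpr fun x hx ε hε => ?_
  obtain ⟨η, hη, hω⟩ := exists_pos_omegaMod_le_add hρ hδ (half_pos hε)
  refine ⟨η, hη, fun x' hx' hxx' => ?_⟩
  rw [Real.dist_eq] at hxx' ⊢
  have h₁ := hω x' hx' x hx hxx'
  have h₂ := hω x hx x' hx' (by rwa [abs_sub_comm])
  rw [abs_lt]
  constructor <;> linarith

end ModulusOfContinuity

section Averaging

noncomputable def avgOp (y : ℝ) (φ : ℝ → ℝ) (x : ℝ) : ℝ :=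
  ∫ t in (0:ℝ)..1, φ ((1 - y) * x + y * t)

lemma Gop_eq_avgOp (y : ℝ) (ρ : ℝ → ℝ) :
    Gop y ρ = avgOp y (fun s => ρ s - omegaMod ρ s y) := rfl

lemma Hop_eq_avgOp (y : ℝ) (ρ : ℝ → ℝ) :
    Hop y ρ = avgOp y (fun s => ρ s + omegaMod ρ s y) := rfl

variable {y : ℝ} {φ : ℝ → ℝ}

lemma affine_mem_Icc (hy₀ : 0 ≤ y) (hy₁ : y ≤ 1) {x t : ℝ} (hx : x ∈ Icc (0:ℝ) 1)
    (ht : t ∈ Icc (0:ℝ) 1) : (1 - y) * x + y * t ∈ Icc (0:ℝ) 1 := by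
  obtain ⟨hx₀, hx₁⟩ := hx
  obtain ⟨ht₀, ht₁⟩ := ht
  constructor <;> nlinarith [mul_nonneg (sub_nonneg.mpr hy₁) hx₀, mul_nonneg hy₀ ht₀,
    mul_le_mul_of_nonneg_left hx₁ (sub_nonneg.mpr hy₁), mul_le_mul_of_nonneg_left ht₁ hy₀]

lemma intervalIntegrable_comp_affine (hy₀ : 0 ≤ y) (hy₁ : y ≤ 1) (hφ : ContinuousOn φ (Icc 0 1))
    {x : ℝ} (hx : x ∈ Icc (0:ℝ) 1) :
    IntervalIntegrable (fun t => φ ((1 - y) * x + y * t)) volume 0 1 :=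
  (hφ.comp (by fun_prop) fun _ ht => affine_mem_Icc hy₀ hy₁ hx ht).intervalIntegrable_of_Icc
    zero_le_one

lemma intervalIntegrable_of_continuousOn_Icc (hφ : ContinuousOn φ (Icc 0 1)) {c : ℝ}
    (hc : c ∈ Icc (0:ℝ) 1) : IntervalIntegrable φ volume 0 c :=
  (hφ.mono (Icc_subset_Icc le_rfl hc.2)).intervalIntegrable_of_Icc hc.1

lemma avgOp_eq (hy₀ : 0 < y) (hy₁ : y ≤ 1) (hφ : ContinuousOn φ (Icc 0 1)) {x : ℝ}
    (hx : x ∈ Icc (0:ℝ) 1) :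
    avgOp y φ x =
      y⁻¹ * ((∫ s in (0:ℝ)..(1 - y) * x + y, φ s) - ∫ s in (0:ℝ)..(1 - y) * x, φ s) := by
  have hleft : (1 - y) * x ∈ Icc (0:ℝ) 1 := by
    simpa using affine_mem_Icc hy₀.le hy₁ hx (t := 0) (by simp)
  have hright : (1 - y) * x + y ∈ Icc (0:ℝ) 1 := by
    simpa using affine_mem_Icc hy₀.le hy₁ hx (t := 1) (by simp)
  have hcomm : ∀ t : ℝ, (1 - y) * x + y * t = y * t + (1 - y) * x := fun t => by ring
  simp_rw [avgOp, hcomm, intervalIntegral.integral_comp_mul_add φ hy₀.ne', smul_eq_mul]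
  rw [intervalIntegral.integral_interval_sub_left
    (intervalIntegrable_of_continuousOn_Icc hφ hright)
    (intervalIntegrable_of_continuousOn_Icc hφ hleft)]
  ring_nf

lemma continuousOn_avgOp (hy₀ : 0 < y) (hy₁ : y ≤ 1) (hφ : ContinuousOn φ (Icc 0 1)) :
    ContinuousOn (avgOp y φ) (Icc 0 1) := by
  have hprim : ContinuousOn (fun u => ∫ s in (0:ℝ)..u, φ s) (Icc 0 1) := by
    simpa [uIcc_of_le zero_le_one] using
      intervalIntegral.continuousOn_primitive_interval (a := 0) (b := 1) (μ := volume)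
        (by simpa [uIcc_of_le zero_le_one] using hφ.integrableOn_Icc)
  refine ContinuousOn.congr ?_ fun x hx => avgOp_eq hy₀ hy₁ hφ hx
  refine continuousOn_const.mul (ContinuousOn.sub ?_ ?_)
  · exact hprim.comp (by fun_prop) fun x hx => by
      simpa using affine_mem_Icc hy₀.le hy₁ hx (t := 1) (by simp)
  · exact hprim.comp (by fun_prop) fun x hx => by
      simpa using affine_mem_Icc hy₀.le hy₁ hx (t := 0) (by simp)

lemma hasDerivAt_avgOp (hy₀ : 0 < y) (hy₁ : y < 1) (hφ : ContinuousOn φ (Icc 0 1)) {x : ℝ}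
    (hx : x ∈ Ioo (0:ℝ) 1) :
    HasDerivAt (avgOp y φ) ((1 - y) / y * (φ ((1 - y) * x + y) - φ ((1 - y) * x))) x := by
  have hprim : ∀ u ∈ Ioo (0:ℝ) 1, HasDerivAt (fun u => ∫ s in (0:ℝ)..u, φ s) (φ u) u :=
    fun u hu => intervalIntegral.integral_hasDerivAt_right
      (intervalIntegrable_of_continuousOn_Icc hφ (Ioo_subset_Icc_self hu))
      ((hφ.mono Ioo_subset_Icc_self).stronglyMeasurableAtFilter isOpen_Ioo u hu)
      (hφ.continuousAt (Icc_mem_nhds hu.1 hu.2))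
  obtain ⟨hx₀, hx₁⟩ := hx
  have hright := (hprim ((1 - y) * x + y) ⟨by nlinarith, by nlinarith⟩).comp x
    (((hasDerivAt_id x).const_mul (1 - y)).add_const y)
  have hleft := (hprim ((1 - y) * x) ⟨by nlinarith, by nlinarith⟩).comp x
    ((hasDerivAt_id x).const_mul (1 - y))
  refine ((hright.sub hleft).const_mul y⁻¹).congr_of_eventuallyEq ?_ |>.congr_deriv ?_
  · filter_upwards [Icc_mem_nhds hx₀ hx₁] with x' hx'
    exact avgOp_eq hy₀ hy₁.le hφ hx'
  · simp only [mul_one]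
    field_simp

lemma intervalIntegrable_deriv_avgOp (hy₀ : 0 < y) (hy₁ : y < 1)
    (hφ : ContinuousOn φ (Icc 0 1)) : IntervalIntegrable (deriv (avgOp y φ)) volume 0 1 := by
  have hD : ContinuousOn (fun x => (1 - y) / y * (φ ((1 - y) * x + y) - φ ((1 - y) * x)))
      (Icc 0 1) := by
    refine continuousOn_const.mul (ContinuousOn.sub ?_ ?_)
    · exact hφ.comp (by fun_prop) fun x hx => by
        simpa using affine_mem_Icc hy₀.le hy₁.le hx (t := 1) (by simp)
    · exact hφ.comp (by fun_prop) fun x hx => by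
        simpa using affine_mem_Icc hy₀.le hy₁.le hx (t := 0) (by simp)
  rw [intervalIntegrable_iff_integrableOn_Ioc_of_le zero_le_one,
    integrableOn_Ioc_iff_integrableOn_Ioo]
  exact (hD.integrableOn_Icc.mono_set Ioo_subset_Icc_self).congr_fun
    (fun x hx => (hasDerivAt_avgOp hy₀ hy₁ hφ hx).deriv.symm) measurableSet_Ioo

lemma avgOp_eq_add_integral_deriv (hy₀ : 0 < y) (hy₁ : y < 1) (hφ : ContinuousOn φ (Icc 0 1))
    {x : ℝ} (hx : x ∈ Icc (0:ℝ) 1) :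
    avgOp y φ x = avgOp y φ 0 + ∫ t in (0:ℝ)..x, deriv (avgOp y φ) t := by
  have hsub : uIcc (0:ℝ) x ⊆ uIcc 0 1 := by
    rw [uIcc_of_le hx.1, uIcc_of_le zero_le_one]
    exact Icc_subset_Icc le_rfl hx.2
  rw [intervalIntegral.integral_eq_sub_of_hasDeriv_right_of_le hx.1
    ((continuousOn_avgOp hy₀ hy₁.le hφ).mono (Icc_subset_Icc le_rfl hx.2))
    (fun t ht =>
      (hasDerivAt_avgOp hy₀ hy₁ hφ ⟨ht.1, ht.2.trans_le hx.2⟩).differentiableAt.hasDerivAt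
        |>.hasDerivWithinAt)
    ((intervalIntegrable_deriv_avgOp hy₀ hy₁ hφ).mono_set hsub)]
  ring

end Averaging

section Sandwich

variable {y : ℝ} {ρ : ℝ → ℝ}

lemma abs_sub_le_omegaMod_affine (hρ : ContinuousOn ρ (Icc 0 1)) (hy₀ : 0 ≤ y) (hy₁ : y ≤ 1)
    {x t : ℝ} (hx : x ∈ Icc (0:ℝ) 1) (ht : t ∈ Icc (0:ℝ) 1) :
    |ρ ((1 - y) * x + y * t) - ρ x| ≤ omegaMod ρ ((1 - y) * x + y * t) y := by
  have hs := affine_mem_Icc hy₀ hy₁ hx ht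
  refine abs_sub_le_omegaMod hρ ⟨⟨by linarith, by linarith⟩, hs⟩ ⟨⟨?_, ?_⟩, hx⟩ <;>
    nlinarith [ht.1, ht.2, hx.1, hx.2]

lemma Gop_le (hρ : ContinuousOn ρ (Icc 0 1)) (hy₀ : 0 ≤ y) (hy₁ : y ≤ 1) {x : ℝ}
    (hx : x ∈ Icc (0:ℝ) 1) : Gop y ρ x ≤ ρ x := by
  have hφ : ContinuousOn (fun s => ρ s - omegaMod ρ s y) (Icc 0 1) :=
    hρ.sub (continuousOn_omegaMod hρ hy₀)
  calc Gop y ρ x ≤ ∫ _ in (0:ℝ)..1, ρ x :=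
        intervalIntegral.integral_mono_on zero_le_one
          (intervalIntegrable_comp_affine hy₀ hy₁ hφ hx) intervalIntegrable_const fun t ht => by
            linarith [le_abs_self (ρ ((1 - y) * x + y * t) - ρ x),
              abs_sub_le_omegaMod_affine hρ hy₀ hy₁ hx ht]
    _ = ρ x := by simp

lemma le_Hop (hρ : ContinuousOn ρ (Icc 0 1)) (hy₀ : 0 ≤ y) (hy₁ : y ≤ 1) {x : ℝ}
    (hx : x ∈ Icc (0:ℝ) 1) : ρ x ≤ Hop y ρ x := by
  have hφ : ContinuousOn (fun s => ρ s + omegaMod ρ s y) (Icc 0 1) :=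
    hρ.add (continuousOn_omegaMod hρ hy₀)
  calc ρ x = ∫ _ in (0:ℝ)..1, ρ x := by simp
    _ ≤ Hop y ρ x :=
        intervalIntegral.integral_mono_on zero_le_one intervalIntegrable_const
          (intervalIntegrable_comp_affine hy₀ hy₁ hφ hx) fun t ht => by
            linarith [neg_abs_le (ρ ((1 - y) * x + y * t) - ρ x),
              abs_sub_le_omegaMod_affine hρ hy₀ hy₁ hx ht]

end Sandwich

section StepKernel

variable {m : ℝ → ℝ}

lemma measurable_stepPhi : Measurable stepPhi :=
  Measurable.ite measurableSet_Ioi measurable_const measurable_const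

lemma intervalIntegrable_stepPhi_sub_mul (hm : IntervalIntegrable m volume 0 1) {x a b : ℝ}
    (hab : uIcc a b ⊆ uIcc 0 1) :
    IntervalIntegrable (fun t => stepPhi (x - t) * m t) volume a b := by
  have hm' := hm.mono_set hab
  rw [intervalIntegrable_iff] at hm' ⊢
  refine hm'.bdd_mul (c := 1)
    (measurable_stepPhi.comp (measurable_const.sub measurable_id)).aestronglyMeasurable
    (ae_of_all _ fun t => ?_)
  unfold stepPhi
  split <;> simp

lemma integral_stepPhi_sub_mul (hm : IntervalIntegrable m volume 0 1) {x : ℝ}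
    (hx : x ∈ Icc (0:ℝ) 1) :
    ∫ t in (0:ℝ)..1, stepPhi (x - t) * m t = ∫ t in (0:ℝ)..x, m t := by
  have h01 : uIcc (0:ℝ) 1 = Icc 0 1 := uIcc_of_le zero_le_one
  rw [← intervalIntegral.integral_add_adjacent_intervals (b := x)
    (intervalIntegrable_stepPhi_sub_mul hm (by rw [h01, uIcc_of_le hx.1]; gcongr; exact hx.2))
    (intervalIntegrable_stepPhi_sub_mul hm (by rw [h01, uIcc_of_le hx.2]; gcongr; exact hx.1))]
  have hright : ∫ t in x..1, stepPhi (x - t) * m t = 0 := by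
    refine (intervalIntegral.integral_congr fun t ht => ?_).trans intervalIntegral.integral_zero
    rw [uIcc_of_le hx.2] at ht
    simp [stepPhi, ht.1]
  have hleft : ∫ t in (0:ℝ)..x, stepPhi (x - t) * m t = ∫ t in (0:ℝ)..x, m t := by
    refine intervalIntegral.integral_congr_ae ?_
    filter_upwards [volume.ae_ne x] with t ht htx
    rw [uIoc_of_le hx.1] at htx
    simp [stepPhi, lt_of_le_of_ne htx.2 ht]
  rw [hleft, hright, add_zero]

variable {P Q : Polynomial ℝ}

lemma integral_eval_sub_mul_le_integral (hP : ∀ u ∈ Icc (-1:ℝ) 1, P.eval u ≤ stepPhi u)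
    (hm : IntervalIntegrable m volume 0 1) (hm₀ : ∀ t, 0 ≤ m t) {x : ℝ}
    (hx : x ∈ Icc (0:ℝ) 1) :
    ∫ t in (0:ℝ)..1, P.eval (x - t) * m t ≤ ∫ t in (0:ℝ)..x, m t := by
  rw [← integral_stepPhi_sub_mul hm hx]
  refine intervalIntegral.integral_mono_on zero_le_one
    (hm.continuousOn_mul (by fun_prop)) (intervalIntegrable_stepPhi_sub_mul hm subset_rfl)
    fun t ht => mul_le_mul_of_nonneg_right (hP _ ⟨?_, ?_⟩) (hm₀ t)
  all_goals linarith [ht.1, ht.2, hx.1, hx.2]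

lemma integral_le_integral_eval_sub_mul (hQ : ∀ u ∈ Icc (-1:ℝ) 1, stepPhi u ≤ Q.eval u)
    (hm : IntervalIntegrable m volume 0 1) (hm₀ : ∀ t, 0 ≤ m t) {x : ℝ}
    (hx : x ∈ Icc (0:ℝ) 1) :
    ∫ t in (0:ℝ)..x, m t ≤ ∫ t in (0:ℝ)..1, Q.eval (x - t) * m t := by
  rw [← integral_stepPhi_sub_mul hm hx]
  refine intervalIntegral.integral_mono_on zero_le_one
    (intervalIntegrable_stepPhi_sub_mul hm subset_rfl) (hm.continuousOn_mul (by fun_prop))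
    fun t ht => mul_le_mul_of_nonneg_right (hQ _ ⟨?_, ?_⟩) (hm₀ t)
  all_goals linarith [ht.1, ht.2, hx.1, hx.2]

end StepKernel

section PolynomialKernel

open Polynomial

/-- Taylor expansion `R(x - t) = ∑ⱼ (hasseDeriv j R)(-t) xʲ` separates the variables. -/
lemma exists_natDegree_le_integral_eval_sub_mul {k : ℕ} {R : ℝ[X]} (hR : R.natDegree ≤ k)
    {m : ℝ → ℝ} (hm : IntervalIntegrable m volume 0 1) :
    ∃ S : ℝ[X], S.natDegree ≤ k ∧
      ∀ x, ∫ t in (0:ℝ)..1, R.eval (x - t) * m t = S.eval x := by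
  refine ⟨∑ j ∈ Finset.range (k + 1),
    C (∫ t in (0:ℝ)..1, (hasseDeriv j R).eval (-t) * m t) * X ^ j,
    natDegree_sum_le_of_forall_le _ _ fun j hj =>
      (natDegree_C_mul_X_pow_le _ j).trans (Nat.lt_succ_iff.mp (Finset.mem_range.mp hj)),
    fun x => ?_⟩
  have htaylor : ∀ t, R.eval (x - t) =
      ∑ j ∈ Finset.range (k + 1), (hasseDeriv j R).eval (-t) * x ^ j := fun t => by
    rw [sub_eq_add_neg, ← taylor_eval,
      eval_eq_sum_range' (n := k + 1) (by rw [natDegree_taylor]; omega)]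
    simp only [taylor_coeff]
  calc ∫ t in (0:ℝ)..1, R.eval (x - t) * m t
      = ∫ t in (0:ℝ)..1, ∑ j ∈ Finset.range (k + 1),
          (hasseDeriv j R).eval (-t) * m t * x ^ j :=
        intervalIntegral.integral_congr fun t _ => by
          rw [htaylor, Finset.sum_mul]
          exact Finset.sum_congr rfl fun j _ => by ring
    _ = _ := by
        rw [intervalIntegral.integral_finsetSum fun j _ =>
          (hm.continuousOn_mul (by fun_prop)).mul_const _]
        simp only [eval_finsetSum, eval_mul, eval_C, eval_pow, eval_X,
          intervalIntegral.integral_mul_const]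

end PolynomialKernel

section KernelOperators

variable {P Q : Polynomial ℝ} {g : ℝ → ℝ}

lemma IntervalIntegrable.pos_part {μ : Measure ℝ} {a b : ℝ} (hg : IntervalIntegrable g μ a b) :
    IntervalIntegrable (fun t => max (g t) 0) μ a b :=
  ⟨hg.1.pos_part, hg.2.pos_part⟩

lemma IntervalIntegrable.neg_part {μ : Measure ℝ} {a b : ℝ} (hg : IntervalIntegrable g μ a b) :
    IntervalIntegrable (fun t => max (-g t) 0) μ a b :=
  ⟨hg.1.neg_part, hg.2.neg_part⟩

lemma integral_eq_integral_max_sub_integral_max (hg : IntervalIntegrable g volume 0 1) {x : ℝ}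
    (hx : x ∈ Icc (0:ℝ) 1) :
    ∫ t in (0:ℝ)..x, g t = (∫ t in (0:ℝ)..x, max (g t) 0) - ∫ t in (0:ℝ)..x, max (-g t) 0 := by
  have hsub : uIcc (0:ℝ) x ⊆ uIcc 0 1 := by
    rw [uIcc_of_le hx.1, uIcc_of_le zero_le_one]
    exact Icc_subset_Icc le_rfl hx.2
  rw [← intervalIntegral.integral_sub (hg.pos_part.mono_set hsub) (hg.neg_part.mono_set hsub)]
  simp only [max_zero_sub_max_neg_zero_eq_self]

lemma exists_natDegree_le_Mop_eq {k : ℕ} (hP : P.natDegree ≤ k) (hQ : Q.natDegree ≤ k) (f₀ : ℝ)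
    (hg : IntervalIntegrable g volume 0 1) :
    ∃ L : Polynomial ℝ, L.natDegree ≤ k ∧ ∀ x, Mop P Q f₀ g x = L.eval x := by
  obtain ⟨Spos, hSpos, hSpos_eq⟩ := exists_natDegree_le_integral_eval_sub_mul hP hg.pos_part
  obtain ⟨Sneg, hSneg, hSneg_eq⟩ := exists_natDegree_le_integral_eval_sub_mul hQ hg.neg_part
  refine ⟨Polynomial.C f₀ + Spos - Sneg, ?_, fun x => ?_⟩
  · refine (Polynomial.natDegree_sub_le_of_le
      (Polynomial.natDegree_add_le_of_degree_le (by simp) hSpos) hSneg).trans (max_self k).le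
  · simp [Mop, hSpos_eq, hSneg_eq]

lemma Mop_le_add_integral (hP : ∀ u ∈ Icc (-1:ℝ) 1, P.eval u ≤ stepPhi u)
    (hQ : ∀ u ∈ Icc (-1:ℝ) 1, stepPhi u ≤ Q.eval u) (f₀ : ℝ)
    (hg : IntervalIntegrable g volume 0 1) {x : ℝ} (hx : x ∈ Icc (0:ℝ) 1) :
    Mop P Q f₀ g x ≤ f₀ + ∫ t in (0:ℝ)..x, g t := by
  have hpos := integral_eval_sub_mul_le_integral hP hg.pos_part (fun _ => le_max_right _ _) hx
  have hneg :=
    integral_le_integral_eval_sub_mul hQ hg.neg_part (fun _ => le_max_right _ _) hx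
  rw [Mop, integral_eq_integral_max_sub_integral_max hg hx]
  linarith

lemma add_integral_le_Nop (hP : ∀ u ∈ Icc (-1:ℝ) 1, P.eval u ≤ stepPhi u)
    (hQ : ∀ u ∈ Icc (-1:ℝ) 1, stepPhi u ≤ Q.eval u) (f₀ : ℝ)
    (hg : IntervalIntegrable g volume 0 1) {x : ℝ} (hx : x ∈ Icc (0:ℝ) 1) :
    f₀ + ∫ t in (0:ℝ)..x, g t ≤ Nop P Q f₀ g x := by
  have hpos := integral_le_integral_eval_sub_mul hQ hg.pos_part (fun _ => le_max_right _ _) hx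
  have hneg :=
    integral_eval_sub_mul_le_integral hP hg.neg_part (fun _ => le_max_right _ _) hx
  rw [Nop, integral_eq_integral_max_sub_integral_max hg hx]
  linarith

end KernelOperators

theorem stmt9_general (k : ℕ) (P Q : Polynomial ℝ)
    (hPdeg : P.natDegree ≤ k) (hQdeg : Q.natDegree ≤ k)
    (hPQ : ∀ u ∈ Icc (-1:ℝ) 1, P.eval u ≤ stepPhi u ∧ stepPhi u ≤ Q.eval u)
    (y : ℝ) (hy : y ∈ Ioo (0:ℝ) 1)
    (ρ : ℝ → ℝ) (hρ : ContinuousOn ρ (Icc (0:ℝ) 1)) :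
    (∃ L' : Polynomial ℝ, L'.natDegree ≤ k ∧ ∀ x ∈ Icc (0:ℝ) 1,
      Mop P Q (Gop y ρ 0) (deriv (Gop y ρ)) x = L'.eval x) ∧
    (∃ J' : Polynomial ℝ, J'.natDegree ≤ k ∧ ∀ x ∈ Icc (0:ℝ) 1,
      Nop P Q (Hop y ρ 0) (deriv (Hop y ρ)) x = J'.eval x) ∧
    (∀ x ∈ Icc (0:ℝ) 1,
      Mop P Q (Gop y ρ 0) (deriv (Gop y ρ)) x ≤ ρ x ∧
      ρ x ≤ Nop P Q (Hop y ρ 0) (deriv (Hop y ρ)) x) := by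
  obtain ⟨hy₀, hy₁⟩ := hy
  have hP x hx := (hPQ x hx).1
  have hQ x hx := (hPQ x hx).2
  have hω := continuousOn_omegaMod hρ hy₀.le
  have hφG : ContinuousOn (fun s => ρ s - omegaMod ρ s y) (Icc 0 1) := hρ.sub hω
  have hφH : ContinuousOn (fun s => ρ s + omegaMod ρ s y) (Icc 0 1) := hρ.add hω
  have hG' := intervalIntegrable_deriv_avgOp hy₀ hy₁ hφG
  have hH' := intervalIntegrable_deriv_avgOp hy₀ hy₁ hφH
  have hG_ftc x (hx : x ∈ Icc (0:ℝ) 1) := avgOp_eq_add_integral_deriv hy₀ hy₁ hφG hx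
  have hH_ftc x (hx : x ∈ Icc (0:ℝ) 1) := avgOp_eq_add_integral_deriv hy₀ hy₁ hφH hx
  rw [← Gop_eq_avgOp] at hG' hG_ftc
  rw [← Hop_eq_avgOp] at hH' hH_ftc
  obtain ⟨L, hL, hL_eq⟩ := exists_natDegree_le_Mop_eq hPdeg hQdeg (Gop y ρ 0) hG'
  -- `Nop P Q` is `Mop Q P` by definition.
  obtain ⟨J, hJ, hJ_eq⟩ := exists_natDegree_le_Mop_eq hQdeg hPdeg (Hop y ρ 0) hH'
  refine ⟨⟨L, hL, fun x _ => hL_eq x⟩, ⟨J, hJ, fun x _ => hJ_eq x⟩, fun x hx => ⟨?_, ?_⟩⟩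
  · calc Mop P Q (Gop y ρ 0) (deriv (Gop y ρ)) x
        ≤ Gop y ρ 0 + ∫ t in (0:ℝ)..x, deriv (Gop y ρ) t := Mop_le_add_integral hP hQ _ hG' hx
      _ = Gop y ρ x := (hG_ftc x hx).symm
      _ ≤ ρ x := Gop_le hρ hy₀.le hy₁.le hx
  · calc ρ x ≤ Hop y ρ x := le_Hop hρ hy₀.le hy₁.le hx
      _ = Hop y ρ 0 + ∫ t in (0:ℝ)..x, deriv (Hop y ρ) t := hH_ftc x hx
      _ ≤ Nop P Q (Hop y ρ 0) (deriv (Hop y ρ)) x := add_integral_le_Nop hP hQ _ hH' hx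

/-- Theorem 4.2, sandwich part: `L_{k,y}(ρ) = M_k(G_y(ρ))` and `J_{k,y}(ρ) = N_k(H_y(ρ))`
are polynomials of degree at most `k` sandwiching `ρ`. -/
theorem stmt9 (k : ℕ) (hk : 2 ≤ k) (P Q : Polynomial ℝ)
    (hPdeg : P.natDegree ≤ k) (hQdeg : Q.natDegree ≤ k)
    (hPQ : ∀ u ∈ Icc (-1:ℝ) 1, P.eval u ≤ stepPhi u ∧ stepPhi u ≤ Q.eval u)
    (y : ℝ) (hy : y ∈ Ioo (0:ℝ) 1)
    (ρ : ℝ → ℝ) (hρ : ContinuousOn ρ (Icc (0:ℝ) 1)) :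
    (∃ L' : Polynomial ℝ, L'.natDegree ≤ k ∧ ∀ x ∈ Icc (0:ℝ) 1,
      Mop P Q (Gop y ρ 0) (deriv (Gop y ρ)) x = L'.eval x) ∧
    (∃ J' : Polynomial ℝ, J'.natDegree ≤ k ∧ ∀ x ∈ Icc (0:ℝ) 1,
      Nop P Q (Hop y ρ 0) (deriv (Hop y ρ)) x = J'.eval x) ∧
    (∀ x ∈ Icc (0:ℝ) 1,
      Mop P Q (Gop y ρ 0) (deriv (Gop y ρ)) x ≤ ρ x ∧
      ρ x ≤ Nop P Q (Hop y ρ 0) (deriv (Hop y ρ)) x) :=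
  stmt9_general k P Q hPdeg hQdeg hPQ y hy ρ hρ
end
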